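/- arXiv:1206.3683 — 2 statements merged into one kernel-verified Lean document; each statement's English description precedes it below -/
import Mathlib

section
/- The real Clifford algebras Cl_{p,q} and Cl_{p-4,q+4} are isomorphic as ℝ-algebras whenever p ≥ 4. -/
/-!
Let `e₁, …, eₙ` be the standard generators of `Cl_{p,q}` and `ω = e_a e_b e_c e_d` the product of
four of them with `e_a² = ⋯ = e_d² = 1`. Then `ω² = 1`, `ω` anticommutes with `e_a, …, e_d` and
commutes with every other generator. Hence `e_i ω` (for `i ∈ {a, b, c, d}`) together with the
untouched `e_i` anticommute pairwise, with `(e_i ω)² = -e_i² = -1`: by the universal property they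
define a map `Cl_{p-4,q+4} → Cl_{p,q}`. The same construction goes back, and the two maps are
mutually inverse because the product of the twisted generators `e_a ω, …, e_d ω` is again `ω`.
-/

/-- The quadratic form on `ℝ^(p+q)` with `p` entries `+1` and `q` entries `-1`,
whose Clifford algebra is the real Clifford algebra `Cl_{p,q}`. -/
noncomputable def Qpq (p q : ℕ) : QuadraticForm ℝ (Fin (p + q) → ℝ) :=
  QuadraticMap.weightedSumSquares ℝ (fun i : Fin (p + q) => if (i : ℕ) < p then (1 : ℝ) else -1)

def AntiCommute {A : Type*} [Ring A] (x y : A) : Prop := x * y = -(y * x)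

namespace AntiCommute

variable {A : Type*} [Ring A] {x y z ω : A}

theorem symm (h : AntiCommute x y) : AntiCommute y x := by
  rw [AntiCommute, h, neg_neg]

theorem commute_mul_right (hy : AntiCommute x y) (hz : AntiCommute x z) :
    Commute x (y * z) := by
  rw [Commute, SemiconjBy, ← mul_assoc, hy, neg_mul, mul_assoc, hz, mul_neg, neg_neg, mul_assoc]

theorem mul_right_of_commute (hy : AntiCommute x y) (hz : Commute x z) :
    AntiCommute x (y * z) := by
  rw [AntiCommute, ← mul_assoc, hy, neg_mul, mul_assoc, hz.eq, mul_assoc]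

theorem mul_left_of_commute (h : AntiCommute x y) (hω : Commute ω y) :
    AntiCommute (x * ω) y := by
  rw [AntiCommute, mul_assoc, hω.eq, ← mul_assoc, h, neg_mul, mul_assoc]

theorem mul_mul_self (h : AntiCommute x y) : x * y * (x * y) = -(x * x * (y * y)) := by
  rw [mul_assoc, ← mul_assoc y, h.symm]
  simp only [neg_mul, mul_neg, mul_assoc]

theorem mul_mul_mul_of_mul_self_eq_one (hy : AntiCommute y ω)
    (hω : ω * ω = 1) : x * ω * (y * ω) = -(x * y) := by
  rw [mul_assoc, ← mul_assoc ω, hy.symm, neg_mul, mul_neg, ← mul_assoc, ← mul_assoc, mul_assoc,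
    hω, mul_one]

end AntiCommute

theorem Commute.antiCommute_mul_right {A : Type*} [Ring A] {x y z : A} (hy : Commute x y)
    (hz : AntiCommute x z) : AntiCommute x (y * z) := by
  rw [AntiCommute, ← mul_assoc, hy.eq, mul_assoc, hz, mul_neg, mul_assoc]

variable {ι R A B : Type*} [CommRing R] [Ring A] [Algebra R A] [Ring B] [Algebra R B]

structure IsCliffordFamily (w : ι → R) (v : ι → A) : Prop where
  mul_self : ∀ i, v i * v i = algebraMap R A (w i)
  antiCommute : ∀ ⦃i j⦄, i ≠ j → AntiCommute (v i) (v j)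

def volumeElement (v : ι → A) (a b c d : ι) : A := v a * v b * (v c * v d)

def twist [DecidableEq ι] (S : Finset ι) (ω : A) (v : ι → A) (i : ι) : A :=
  if i ∈ S then v i * ω else v i

def volumeTwist [DecidableEq ι] (v : ι → A) (a b c d : ι) : ι → A :=
  twist {a, b, c, d} (volumeElement v a b c d) v

namespace IsCliffordFamily

variable [DecidableEq ι] {w w' : ι → R} {v : ι → A} {S : Finset ι} {ω : A}

theorem twist (hv : IsCliffordFamily w v) (hω : ω * ω = 1)
    (hS : ∀ i ∈ S, AntiCommute (v i) ω) (hSc : ∀ i ∉ S, Commute (v i) ω)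
    (hw' : ∀ i, w' i = if i ∈ S then -w i else w i) :
    IsCliffordFamily w' (twist S ω v) where
  mul_self i := by
    by_cases hi : i ∈ S
    · rw [_root_.twist, if_pos hi, (hS i hi).mul_mul_mul_of_mul_self_eq_one hω, hv.mul_self,
        hw', if_pos hi, map_neg]
    · rw [_root_.twist, if_neg hi, hv.mul_self, hw', if_neg hi]
  antiCommute i j hij := by
    have hvij := hv.antiCommute hij
    by_cases hi : i ∈ S <;> by_cases hj : j ∈ S <;>
      simp only [_root_.twist, hi, hj, if_true, if_false]
    · rw [AntiCommute, (hS j hj).mul_mul_mul_of_mul_self_eq_one hω,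
        (hS i hi).mul_mul_mul_of_mul_self_eq_one hω, hvij]
    · exact hvij.mul_left_of_commute (hSc j hj).symm
    · exact (hvij.symm.mul_left_of_commute (hSc i hi).symm).symm
    · exact hvij

end IsCliffordFamily

theorem AlgHom.map_volumeElement (f : A →ₐ[R] B) (v : ι → A) (a b c d : ι) :
    f (volumeElement v a b c d) = volumeElement (f ∘ v) a b c d := by
  simp [volumeElement]

section Twist

variable [DecidableEq ι]

theorem twist_twist {S : Finset ι} {ω : A} (v : ι → A) (hω : ω * ω = 1) :
    twist S ω (twist S ω v) = v := by
  ext i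
  by_cases hi : i ∈ S <;> simp [twist, hi, mul_assoc, hω]

theorem AlgHom.comp_twist (f : A →ₐ[R] B) (S : Finset ι) (ω : A) (v : ι → A) :
    f ∘ twist S ω v = twist S (f ω) (f ∘ v) := by
  ext i
  by_cases hi : i ∈ S <;> simp [twist, hi]

end Twist

namespace IsCliffordFamily

variable {w : ι → R} {v : ι → A} {a b c d i : ι}

theorem commute_volumeElement (hv : IsCliffordFamily w v) (ha : i ≠ a) (hb : i ≠ b)
    (hc : i ≠ c) (hd : i ≠ d) : Commute (v i) (volumeElement v a b c d) :=
  ((hv.antiCommute ha).commute_mul_right (hv.antiCommute hb)).mul_right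
    ((hv.antiCommute hc).commute_mul_right (hv.antiCommute hd))

theorem antiCommute_volumeElement (hv : IsCliffordFamily w v) (habcd : [a, b, c, d].Nodup)
    (hi : i = a ∨ i = b ∨ i = c ∨ i = d) : AntiCommute (v i) (volumeElement v a b c d) := by
  simp only [List.nodup_cons, List.mem_cons, List.not_mem_nil, not_or] at habcd
  obtain ⟨⟨hab, hac, had, -⟩, ⟨hbc, hbd, -⟩, ⟨hcd, -⟩, -⟩ := habcd
  rcases hi with rfl | rfl | rfl | rfl
  · exact ((Commute.refl _).antiCommute_mul_right (hv.antiCommute hab)).mul_right_of_commute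
      ((hv.antiCommute hac).commute_mul_right (hv.antiCommute had))
  · exact ((hv.antiCommute (Ne.symm hab)).mul_right_of_commute (.refl _)).mul_right_of_commute
      ((hv.antiCommute hbc).commute_mul_right (hv.antiCommute hbd))
  · exact ((hv.antiCommute (Ne.symm hac)).commute_mul_right
      (hv.antiCommute (Ne.symm hbc))).antiCommute_mul_right
      ((Commute.refl _).antiCommute_mul_right (hv.antiCommute hcd))
  · exact ((hv.antiCommute (Ne.symm had)).commute_mul_right
      (hv.antiCommute (Ne.symm hbd))).antiCommute_mul_right
      ((hv.antiCommute (Ne.symm hcd)).mul_right_of_commute (.refl _))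

theorem volumeElement_mul_self (hv : IsCliffordFamily w v) (habcd : [a, b, c, d].Nodup) :
    volumeElement v a b c d * volumeElement v a b c d =
      algebraMap R A (w a * w b * w c * w d) := by
  simp only [List.nodup_cons, List.mem_cons, List.not_mem_nil, not_or] at habcd
  obtain ⟨⟨hab, hac, had, -⟩, ⟨hbc, hbd, -⟩, ⟨hcd, -⟩, -⟩ := habcd
  have hcomm : Commute (v a * v b) (v c * v d) :=
    (((hv.antiCommute (Ne.symm hac)).commute_mul_right (hv.antiCommute (Ne.symm hbc))).mul_left
      ((hv.antiCommute (Ne.symm had)).commute_mul_right (hv.antiCommute (Ne.symm hbd)))).symm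
  rw [volumeElement, hcomm.symm.mul_mul_mul_comm, (hv.antiCommute hab).mul_mul_self,
    (hv.antiCommute hcd).mul_mul_self]
  simp only [hv.mul_self, neg_mul_neg, ← map_mul, mul_assoc]

variable [DecidableEq ι]

theorem volumeElement_twist (hv : IsCliffordFamily w v) (habcd : [a, b, c, d].Nodup)
    (hω : volumeElement v a b c d * volumeElement v a b c d = 1) :
    volumeElement (_root_.twist {a, b, c, d} (volumeElement v a b c d) v) a b c d =
      volumeElement v a b c d := by
  set ω := volumeElement v a b c d
  have key {i j : ι} (hj : j = a ∨ j = b ∨ j = c ∨ j = d) : v i * ω * (v j * ω) = -(v i * v j) :=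
    (hv.antiCommute_volumeElement habcd hj).mul_mul_mul_of_mul_self_eq_one hω
  conv_lhs => simp only [volumeElement, _root_.twist, Finset.mem_insert, Finset.mem_singleton,
    true_or, or_true, if_true]
  rw [key (by simp), key (by simp), neg_mul_neg]
  rfl

theorem volumeTwist {w' : ι → R} (hv : IsCliffordFamily w v) (habcd : [a, b, c, d].Nodup)
    (hw : w a * w b * w c * w d = 1)
    (hw' : ∀ i, w' i = if i ∈ ({a, b, c, d} : Finset ι) then -w i else w i) :
    IsCliffordFamily w' (volumeTwist v a b c d) := by
  refine hv.twist (by rw [hv.volumeElement_mul_self habcd, hw, map_one]) (fun i hi => ?_)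
    (fun i hi => ?_) hw'
  · exact hv.antiCommute_volumeElement habcd (by simpa using hi)
  · simp only [Finset.mem_insert, Finset.mem_singleton, not_or] at hi
    exact hv.commute_volumeElement hi.1 hi.2.1 hi.2.2.1 hi.2.2.2

theorem volumeTwist_volumeTwist (hv : IsCliffordFamily w v) (habcd : [a, b, c, d].Nodup)
    (hw : w a * w b * w c * w d = 1) :
    _root_.volumeTwist (_root_.volumeTwist v a b c d) a b c d = v := by
  have hω : volumeElement v a b c d * volumeElement v a b c d = 1 := by
    rw [hv.volumeElement_mul_self habcd, hw, map_one]
  rw [_root_.volumeTwist, _root_.volumeTwist, hv.volumeElement_twist habcd hω, twist_twist v hω]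

end IsCliffordFamily

theorem AlgHom.comp_volumeTwist [DecidableEq ι] (f : A →ₐ[R] B) (v : ι → A) (a b c d : ι) :
    f ∘ volumeTwist v a b c d = volumeTwist (f ∘ v) a b c d := by
  rw [volumeTwist, AlgHom.comp_twist, AlgHom.map_volumeElement, volumeTwist]

open QuadraticMap

section WeightedSumSquares

variable [Fintype ι] [DecidableEq ι] {w w' : ι → R}

theorem IsCliffordFamily.linearCombination_mul_self {v : ι → A} (hv : IsCliffordFamily w v)
    (x : ι → R) :
    Fintype.linearCombination R v x * Fintype.linearCombination R v x =
      algebraMap R A (weightedSumSquares R w x) := by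
  have hsum := (QuadraticMap.sq (R := R) (A := A)).map_sum Finset.univ (fun i => x i • v i)
  simp only [QuadraticMap.sq_apply] at hsum
  rw [Fintype.linearCombination_apply, hsum, add_eq_left.mpr (Finset.sum_eq_zero ?_),
    weightedSumSquares_apply, map_sum]
  · refine Finset.sum_congr rfl fun i _ => ?_
    rw [smul_mul_smul_comm, hv.mul_self, Algebra.smul_def, ← map_mul, smul_eq_mul, mul_comm]
  · intro p hp
    induction p using Sym2.ind with
    | h i j =>
      simp only [Finset.mem_filter, Sym2.mk_isDiag_iff] at hp
      simp only [Sym2.map_mk, polarSym2_sym2Mk, polar, QuadraticMap.sq_apply, add_mul, mul_add,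
        smul_mul_smul_comm, mul_comm (x j) (x i)]
      abel_nf
      rw [← smul_add, hv.antiCommute hp.2, add_neg_cancel, smul_zero]

theorem QuadraticMap.weightedSumSquares_single (w : ι → R) (i : ι) :
    weightedSumSquares R w (Pi.single i 1) = w i := by
  simp [weightedSumSquares_apply, Pi.single_apply]

theorem QuadraticMap.polar_weightedSumSquares_single (w : ι → R) {i j : ι} (hij : i ≠ j) :
    polar (weightedSumSquares R w) (Pi.single i 1) (Pi.single j 1) = 0 := by
  simp [polar, weightedSumSquares_apply, Pi.single_apply, mul_add, Finset.sum_add_distrib, hij,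
    hij.symm]

def cliffordGen (w : ι → R) (i : ι) : CliffordAlgebra (weightedSumSquares R w) :=
  CliffordAlgebra.ι _ (Pi.single i 1)

theorem isCliffordFamily_cliffordGen (w : ι → R) : IsCliffordFamily w (cliffordGen w) where
  mul_self i := by rw [cliffordGen, CliffordAlgebra.ι_sq_scalar, weightedSumSquares_single]
  antiCommute i j hij := by
    rw [AntiCommute, eq_neg_iff_add_eq_zero, cliffordGen, cliffordGen,
      CliffordAlgebra.ι_mul_ι_add_swap, polar_weightedSumSquares_single w hij, map_zero]

theorem CliffordAlgebra.algHom_ext_cliffordGen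
    {f g : CliffordAlgebra (weightedSumSquares R w) →ₐ[R] A}
    (h : ∀ i, f (cliffordGen w i) = g (cliffordGen w i)) : f = g := by
  refine CliffordAlgebra.hom_ext (LinearMap.pi_ext fun i r => ?_)
  have hsingle : (Pi.single i r : ι → R) = r • Pi.single i 1 := by
    rw [← Pi.single_smul, smul_eq_mul, mul_one]
  simpa [hsingle, cliffordGen] using congrArg (r • ·) (h i)

namespace IsCliffordFamily

variable {v : ι → A}

def lift (hv : IsCliffordFamily w v) : CliffordAlgebra (weightedSumSquares R w) →ₐ[R] A :=
  CliffordAlgebra.lift _ ⟨Fintype.linearCombination R v, hv.linearCombination_mul_self⟩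

theorem lift_cliffordGen (hv : IsCliffordFamily w v) (i : ι) : hv.lift (cliffordGen w i) = v i := by
  rw [lift, cliffordGen, CliffordAlgebra.lift_ι_apply, Fintype.linearCombination_apply_single,
    one_smul]

end IsCliffordFamily

namespace CliffordAlgebra

variable {a b c d : ι}

def flipHom (habcd : [a, b, c, d].Nodup) (hw' : w' a * w' b * w' c * w' d = 1)
    (hflip : ∀ i, w i = if i ∈ ({a, b, c, d} : Finset ι) then -w' i else w' i) :
    CliffordAlgebra (weightedSumSquares R w) →ₐ[R] CliffordAlgebra (weightedSumSquares R w') :=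
  ((isCliffordFamily_cliffordGen w').volumeTwist habcd hw' hflip).lift

theorem flipHom_comp_cliffordGen (habcd : [a, b, c, d].Nodup)
    (hw' : w' a * w' b * w' c * w' d = 1)
    (hflip : ∀ i, w i = if i ∈ ({a, b, c, d} : Finset ι) then -w' i else w' i) :
    flipHom habcd hw' hflip ∘ cliffordGen w = volumeTwist (cliffordGen w') a b c d :=
  funext (IsCliffordFamily.lift_cliffordGen _)

theorem flipHom_comp_flipHom (habcd : [a, b, c, d].Nodup)
    (hw : w a * w b * w c * w d = 1) (hw' : w' a * w' b * w' c * w' d = 1)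
    (hflip : ∀ i, w i = if i ∈ ({a, b, c, d} : Finset ι) then -w' i else w' i)
    (hflip' : ∀ i, w' i = if i ∈ ({a, b, c, d} : Finset ι) then -w i else w i) :
    (flipHom habcd hw hflip').comp (flipHom habcd hw' hflip) = AlgHom.id R _ := by
  have h : flipHom habcd hw hflip' ∘ (flipHom habcd hw' hflip ∘ cliffordGen w) = cliffordGen w := by
    rw [flipHom_comp_cliffordGen, AlgHom.comp_volumeTwist, flipHom_comp_cliffordGen,
      (isCliffordFamily_cliffordGen w).volumeTwist_volumeTwist habcd hw]
  exact algHom_ext_cliffordGen fun i => congrFun h i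

def flipEquiv (habcd : [a, b, c, d].Nodup) (hw : w a * w b * w c * w d = 1)
    (hflip : ∀ i, w' i = if i ∈ ({a, b, c, d} : Finset ι) then -w i else w i) :
    CliffordAlgebra (weightedSumSquares R w) ≃ₐ[R] CliffordAlgebra (weightedSumSquares R w') :=
  have hw' : w' a * w' b * w' c * w' d = 1 := by simp [hflip, ← hw]
  have hflip_symm : ∀ i, w i = if i ∈ ({a, b, c, d} : Finset ι) then -w' i else w' i := by
    intro i
    split_ifs with hi <;> simp [hflip, hi]
  AlgEquiv.ofAlgHom (flipHom habcd hw' hflip_symm) (flipHom habcd hw hflip)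
    (flipHom_comp_flipHom habcd hw' hw hflip hflip_symm)
    (flipHom_comp_flipHom habcd hw hw' hflip_symm hflip)

end CliffordAlgebra

end WeightedSumSquares

def QuadraticMap.isometryEquivWeightedSumSquaresComp {κ : Type*} [Fintype ι] [Fintype κ]
    (e : ι ≃ κ) (w : κ → R) :
    (weightedSumSquares R (w ∘ e)).IsometryEquiv (weightedSumSquares R w) where
  toLinearEquiv := LinearEquiv.funCongrLeft R R e.symm
  map_app' x := by
    simp only [weightedSumSquares_apply]
    exact Fintype.sum_equiv e.symm _ _ fun k => by simp

/-- `Cl_{p,q} ≅ Cl_{p-4,q+4}` as `ℝ`-algebras whenever `p ≥ 4`. -/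
theorem clifford_iso_mod4 (p q : ℕ) (hp : 4 ≤ p) :
    Nonempty (CliffordAlgebra (Qpq p q) ≃ₐ[ℝ] CliffordAlgebra (Qpq (p - 4) (q + 4))) := by
  have hn : p - 4 + (q + 4) = p + q := by omega
  let a : Fin (p + q) := ⟨p - 4, by omega⟩
  let b : Fin (p + q) := ⟨p - 3, by omega⟩
  let c : Fin (p + q) := ⟨p - 2, by omega⟩
  let d : Fin (p + q) := ⟨p - 1, by omega⟩
  have habcd : [a, b, c, d].Nodup := by simp [a, b, c, d, Fin.ext_iff]; omega
  let w : Fin (p + q) → ℝ := fun i => if (i : ℕ) < p then 1 else -1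
  let w' : Fin (p + q) → ℝ := fun i => if (i : ℕ) < p - 4 then 1 else -1
  have hw : w a * w b * w c * w d = 1 := by
    simp only [w, a, b, c, d, if_pos (show p - 4 < p by omega), if_pos (show p - 3 < p by omega),
      if_pos (show p - 2 < p by omega), if_pos (show p - 1 < p by omega), mul_one]
  have hflip : ∀ i, w' i = if i ∈ ({a, b, c, d} : Finset (Fin (p + q))) then -w i else w i := by
    intro i
    simp only [w, w', a, b, c, d, Finset.mem_insert, Finset.mem_singleton, Fin.ext_iff]
    split_ifs <;> first | omega | norm_num
  -- `Qpq (p - 4) (q + 4)` is `weightedSumSquares ℝ (w' ∘ finCongr hn)` by definition.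
  exact ⟨(CliffordAlgebra.flipEquiv habcd hw hflip).trans
    (CliffordAlgebra.equivOfIsometry
      (QuadraticMap.isometryEquivWeightedSumSquaresComp (finCongr hn) w')).symm⟩
end

section
/- Under the map C : V₁ ⊕ V₂ → Cl(V₁, (1/λ)Q₁) ⊗ Cl(V₂, Q₂) given by C(x,y) = x ⊗ ω + 1 ⊗ y, where dim V₂ is even and ω is the volume element of Cl(V₂,Q₂) with ω² = λ ≠ 0, one has C(x,y)² = (Q₁(x) + Q₂(y))·(1 ⊗ 1); i.e., C is a Clifford map for the quadratic form Q₁ ⊥ Q₂. -/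
open CliffordAlgebra
open scoped TensorProduct

/-- The map `C(x,y) = x ⊗ ω + 1 ⊗ y` into `Cl(V₁,(1/λ)Q₁) ⊗ Cl(V₂,Q₂)`, where `ω`
is the volume element of `Cl(V₂,Q₂)` with `ω² = λ ≠ 0` anti-commuting with every
vector of `V₂`, satisfies `C(x,y)² = (Q₁(x) + Q₂(y))·(1 ⊗ 1)`; i.e. it is a
Clifford map for `Q₁ ⊥ Q₂`. -/
theorem clifford_map_square
    (V₁ V₂ : Type*) [AddCommGroup V₁] [Module ℝ V₁] [AddCommGroup V₂] [Module ℝ V₂]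
    (Q₁ : QuadraticForm ℝ V₁) (Q₂ : QuadraticForm ℝ V₂)
    (lam : ℝ) (hlam : lam ≠ 0)
    (ω : CliffordAlgebra Q₂)
    (hω2 : ω ^ 2 = algebraMap ℝ (CliffordAlgebra Q₂) lam)
    (hanti : ∀ y : V₂, ι Q₂ y * ω = -(ω * ι Q₂ y)) :
    ∀ (x : V₁) (y : V₂),
      (ι (lam⁻¹ • Q₁) x ⊗ₜ[ℝ] ω + 1 ⊗ₜ[ℝ] ι Q₂ y) ^ 2
        = (Q₁ x + Q₂ y) • ((1 : CliffordAlgebra (lam⁻¹ • Q₁)) ⊗ₜ[ℝ]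
            (1 : CliffordAlgebra Q₂)) := by
  intro x y
  rw [sq, add_mul, mul_add, mul_add, Algebra.TensorProduct.tmul_mul_tmul,
    Algebra.TensorProduct.tmul_mul_tmul, Algebra.TensorProduct.tmul_mul_tmul,
    Algebra.TensorProduct.tmul_mul_tmul,
    hanti, TensorProduct.tmul_neg, ← sq, ← sq ω, hω2]
  simp only [one_mul, mul_one, ι_sq_scalar, TensorProduct.neg_tmul]
  rw [sq, ι_sq_scalar]
  have hq : (lam⁻¹ • Q₁) x = lam⁻¹ * Q₁ x := by simp
  rw [hq]
  have h1 : (algebraMap ℝ (CliffordAlgebra (lam⁻¹ • Q₁)) (lam⁻¹ * Q₁ x))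
      ⊗ₜ[ℝ] (algebraMap ℝ (CliffordAlgebra Q₂) lam)
      = (Q₁ x) • ((1 : CliffordAlgebra (lam⁻¹ • Q₁)) ⊗ₜ[ℝ] (1 : CliffordAlgebra Q₂)) := by
    rw [Algebra.algebraMap_eq_smul_one, Algebra.algebraMap_eq_smul_one,
      TensorProduct.smul_tmul, smul_smul, TensorProduct.tmul_smul]
    congr 1
    field_simp
  have h2 : (1 : CliffordAlgebra (lam⁻¹ • Q₁)) ⊗ₜ[ℝ]
      (algebraMap ℝ (CliffordAlgebra Q₂) (Q₂ y))
      = (Q₂ y) • ((1 : CliffordAlgebra (lam⁻¹ • Q₁)) ⊗ₜ[ℝ] (1 : CliffordAlgebra Q₂)) := by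
    rw [Algebra.algebraMap_eq_smul_one, ← TensorProduct.smul_tmul, TensorProduct.smul_tmul']
  rw [h1, h2, add_smul]
  abel
end
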